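/- Let λ > 0, d > 0, φ₁ < φ₂ be real numbers, and let 0 < θ_c ≤ π. With θ₁ = −θ_c/2 and θ₂ = θ_c/2, | (1 / ((φ₂ − φ₁)(sin θ₂ − sin θ₁))) · ∫_{φ₁}^{φ₂} ∫_{θ₁}^{θ₂} exp( i (2π/λ) d sin θ ) cos θ dθ dφ | = | sinc( (2d/λ) · sin(θ_c/2) ) |. -/

import Mathlib

open Real Complex intervalIntegral

/-- The normalized sinc function: `sinc x = sin (π x) / (π x)` for `x ≠ 0` and `sinc 0 = 1`. -/
noncomputable def nsinc (x : ℝ) : ℝ :=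
  if x = 0 then 1 else Real.sin (Real.pi * x) / (Real.pi * x)

/-!
The substitution `u = sin θ` turns the inner integral into the integral of the plane wave
`exp (i a u)` over `[sin θ₁, sin θ₂]`. Centred at the midpoint `m` with half-width `h`, this is
`exp (i a m)` times `∫_{-h}^{h} exp (i a v) dv = 2 h · sinc (a h)`; the `φ`-integral only
contributes the factor `φ₂ - φ₁`, so after normalization a unimodular phase times `sinc (a h)`
remains. For the symmetric range `h = sin (θ_c / 2)`.
-/

theorem nsinc_eq_sinc_pi_mul (x : ℝ) : nsinc x = Real.sinc (π * x) := by
  by_cases hx : x = 0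
  · simp [nsinc, hx]
  · rw [nsinc, if_neg hx, Real.sinc_of_ne_zero (mul_ne_zero pi_ne_zero hx)]

theorem integral_comp_sin_mul_cos {g : ℝ → ℂ} (hg : Continuous g) (θ₁ θ₂ : ℝ) :
    ∫ θ in θ₁..θ₂, g (Real.sin θ) * ((Real.cos θ : ℝ) : ℂ) =
      ∫ u in Real.sin θ₁..Real.sin θ₂, g u := by
  rw [← integral_deriv_smul_comp (fun θ _ ↦ Real.hasDerivAt_sin θ)
    Real.continuous_cos.continuousOn hg]
  simp only [Function.comp_apply, Complex.real_smul, mul_comm]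

theorem integral_cexp_I_mul_neg_to_self (a h : ℝ) :
    ∫ u in -h..h, Complex.exp (Complex.I * ((a * u : ℝ) : ℂ)) =
      ((2 * h * Real.sinc (a * h) : ℝ) : ℂ) := by
  rcases eq_or_ne a 0 with rfl | ha
  · simp [two_mul]
  have hIa : Complex.I * a ≠ 0 := mul_ne_zero I_ne_zero (ofReal_ne_zero.mpr ha)
  simp_rw [ofReal_mul, ← mul_assoc]
  rw [integral_exp_mul_complex hIa]
  rcases eq_or_ne h 0 with rfl | hh
  · simp
  rw [Real.sinc_of_ne_zero (mul_ne_zero ha hh)]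
  have hI : ∀ x : ℝ, Complex.I * a * x = (a * x : ℝ) * Complex.I := fun x ↦ by push_cast; ring
  rw [hI, hI, Complex.exp_mul_I, Complex.exp_mul_I]
  push_cast
  rw [mul_neg, Complex.cos_neg, Complex.sin_neg]
  have haC : (a : ℂ) ≠ 0 := ofReal_ne_zero.mpr ha
  have hhC : (h : ℂ) ≠ 0 := ofReal_ne_zero.mpr hh
  field_simp
  ring

theorem integral_cexp_I_mul (a u₁ u₂ : ℝ) :
    ∫ u in u₁..u₂, Complex.exp (Complex.I * ((a * u : ℝ) : ℂ)) =
      Complex.exp (Complex.I * ((a * ((u₁ + u₂) / 2) : ℝ) : ℂ)) *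
        (((u₂ - u₁) * Real.sinc (a * ((u₂ - u₁) / 2)) : ℝ) : ℂ) := by
  set m := (u₁ + u₂) / 2
  set h := (u₂ - u₁) / 2
  have hshift : ∫ u in u₁..u₂, Complex.exp (Complex.I * ((a * u : ℝ) : ℂ)) =
      ∫ v in -h..h, Complex.exp (Complex.I * ((a * (v + m) : ℝ) : ℂ)) := by
    rw [integral_comp_add_right (fun u ↦ Complex.exp (Complex.I * ((a * u : ℝ) : ℂ)))]
    congr 1 <;> ring
  simp_rw [hshift, mul_add, ofReal_add, mul_add, Complex.exp_add,
    mul_comm _ (Complex.exp (Complex.I * ((a * m : ℝ) : ℂ))), integral_const_mul,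
    integral_cexp_I_mul_neg_to_self]
  congr 2
  ring

theorem normalized_integral_cexp_I_mul_sin_mul_cos (a φ₁ φ₂ θ₁ θ₂ : ℝ) (hφ : φ₁ ≠ φ₂)
    (hθ : Real.sin θ₁ ≠ Real.sin θ₂) :
    (1 / (((φ₂ - φ₁) * (Real.sin θ₂ - Real.sin θ₁) : ℝ) : ℂ)) *
        ∫ _ in φ₁..φ₂, ∫ θ in θ₁..θ₂,
          Complex.exp (Complex.I * ((a * Real.sin θ : ℝ) : ℂ)) * ((Real.cos θ : ℝ) : ℂ) =
      Complex.exp (Complex.I * ((a * ((Real.sin θ₁ + Real.sin θ₂) / 2) : ℝ) : ℂ)) *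
        (Real.sinc (a * ((Real.sin θ₂ - Real.sin θ₁) / 2)) : ℂ) := by
  have hφ' : ((φ₂ - φ₁ : ℝ) : ℂ) ≠ 0 := ofReal_ne_zero.mpr (sub_ne_zero.mpr hφ.symm)
  have hθ' : ((Real.sin θ₂ - Real.sin θ₁ : ℝ) : ℂ) ≠ 0 :=
    ofReal_ne_zero.mpr (sub_ne_zero.mpr hθ.symm)
  rw [integral_comp_sin_mul_cos (g := fun u ↦ Complex.exp (Complex.I * ((a * u : ℝ) : ℂ)))
    (by fun_prop), integral_cexp_I_mul, integral_const, real_smul]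
  push_cast at hφ' hθ' ⊢
  field_simp

theorem spatial_correlation_perpendicular_case_general
    (lam d φ₁ φ₂ θc : ℝ) (hφ : φ₁ < φ₂)
    (hθc : 0 < θc) (hθc' : θc ≤ Real.pi)
    (θ₁ θ₂ : ℝ) (hθ₁ : θ₁ = -(θc / 2)) (hθ₂ : θ₂ = θc / 2) :
    ‖(1 / (((φ₂ - φ₁) * (Real.sin θ₂ - Real.sin θ₁) : ℝ) : ℂ)) *
        ∫ φ in φ₁..φ₂, ∫ θ in θ₁..θ₂,
          Complex.exp (Complex.I * ((2 * Real.pi / lam) * d * Real.sin θ : ℝ)) *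
            ((Real.cos θ : ℝ) : ℂ)‖
      = |nsinc ((2 * d / lam) * Real.sin (θc / 2))| := by
  have hs : 0 < Real.sin (θc / 2) := Real.sin_pos_of_pos_of_lt_pi (by linarith) (by linarith)
  have hsin₁ : Real.sin θ₁ = -Real.sin (θc / 2) := by rw [hθ₁, Real.sin_neg]
  have hsin₂ : Real.sin θ₂ = Real.sin (θc / 2) := by rw [hθ₂]
  rw [normalized_integral_cexp_I_mul_sin_mul_cos _ _ _ _ _ hφ.ne (by linarith), norm_mul,
    Complex.norm_exp_I_mul_ofReal, one_mul, Complex.norm_real, Real.norm_eq_abs,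
    nsinc_eq_sinc_pi_mul, hsin₁, hsin₂]
  congr 2
  ring

/-- Corollary 1, second case (antenna separation perpendicular to the surface direction):
with `θ₁ = −θ_c/2` and `θ₂ = θ_c/2`, the normalized spatial correlation magnitude is
`|sinc((2d/λ) sin(θ_c/2))|`. -/
theorem spatial_correlation_perpendicular_case
    (lam d φ₁ φ₂ θc : ℝ) (hlam : 0 < lam) (hd : 0 < d) (hφ : φ₁ < φ₂)
    (hθc : 0 < θc) (hθc' : θc ≤ Real.pi)
    (θ₁ θ₂ : ℝ) (hθ₁ : θ₁ = -(θc / 2)) (hθ₂ : θ₂ = θc / 2) :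
    ‖(1 / (((φ₂ - φ₁) * (Real.sin θ₂ - Real.sin θ₁) : ℝ) : ℂ)) *
        ∫ φ in φ₁..φ₂, ∫ θ in θ₁..θ₂,
          Complex.exp (Complex.I * ((2 * Real.pi / lam) * d * Real.sin θ : ℝ)) *
            ((Real.cos θ : ℝ) : ℂ)‖
      = |nsinc ((2 * d / lam) * Real.sin (θc / 2))| :=
  spatial_correlation_perpendicular_case_general lam d φ₁ φ₂ θc hφ hθc hθc' θ₁ θ₂ hθ₁ hθ₂
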